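/- arXiv:1704.03650 — 2 statements merged into one kernel-verified Lean document; each statement's English description precedes it below -/
import Mathlib

section
/- Suppose k : ℝ → ℝ is a C^1 diffeomorphism onto ℝ and there exist constants 0 < c ≤ C and a function σ with 0 < c ≤ k'(x)σ(x) ≤ C for all x, where σ has linear growth: σ(x) ≤ K(1 + |x|) for some K > 0. Then there exist constants C₂, C₃ > 0 such that |k^{-1}(x)| ≤ C₃ e^{C₂|x|} for all x ∈ ℝ. -/
/-!
Since `σ(x) ≤ K(1 + |x|) ≤ 2K√(1 + x²)`, the hypothesis `k'σ ≥ c` gives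
`k' ≥ a · arsinh'` with `a = c / (2K)`. Hence `k - a · arsinh` is monotone, so
`a |arsinh x| ≤ |k x - k 0|`, and `|x| = sinh |arsinh x| ≤ exp |arsinh x|` turns this
logarithmic lower growth of `k` into exponential upper growth of `k⁻¹`.
-/

open Real

lemma abs_le_exp_abs_arsinh (x : ℝ) : |x| ≤ exp |arsinh x| := by
  calc |x| = sinh |arsinh x| := by rw [← abs_sinh, sinh_arsinh]
    _ ≤ cosh |arsinh x| + sinh |arsinh x| := le_add_of_nonneg_left (cosh_pos _).le
    _ = exp |arsinh x| := cosh_add_sinh _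

lemma abs_sub_le_abs_sub_of_deriv_le {f g : ℝ → ℝ} (hf : Differentiable ℝ f)
    (hg : Differentiable ℝ g) (hg_mono : Monotone g) (h : ∀ x, deriv g x ≤ deriv f x)
    (x y : ℝ) : |g x - g y| ≤ |f x - f y| := by
  have hfg : Monotone (f - g) :=
    monotone_of_deriv_nonneg (hf.sub hg) fun z => by
      rw [deriv_sub (hf z) (hg z)]
      exact sub_nonneg.2 (h z)
  wlog hxy : y ≤ x generalizing x y
  · rw [abs_sub_comm, abs_sub_comm (f x)]
    exact this y x (le_of_not_ge hxy)
  have hgxy : 0 ≤ g x - g y := sub_nonneg.2 (hg_mono hxy)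
  have := hfg hxy
  simp only [Pi.sub_apply] at this
  rw [abs_of_nonneg hgxy, abs_of_nonneg (by linarith)]
  linarith

lemma abs_le_exp_of_le_deriv {f : ℝ → ℝ} (hf : Differentiable ℝ f) {a : ℝ} (ha : 0 < a)
    (h : ∀ x, a * (√(1 + x ^ 2))⁻¹ ≤ deriv f x) (x : ℝ) :
    |x| ≤ exp (|f x - f 0| / a) := by
  have hgrowth : a * |arsinh x| ≤ |f x - f 0| := by
    have := abs_sub_le_abs_sub_of_deriv_le hf (differentiable_arsinh.const_mul a)
      (arsinh_strictMono.monotone.const_mul ha.le)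
      (fun z => by rw [((hasDerivAt_arsinh z).const_mul a).deriv]; exact h z) x 0
    rwa [arsinh_zero, mul_zero, sub_zero, abs_mul, abs_of_pos ha] at this
  calc |x| ≤ exp |arsinh x| := abs_le_exp_abs_arsinh x
    _ ≤ exp (|f x - f 0| / a) := exp_le_exp.2 ((le_div_iff₀' ha).2 hgrowth)

lemma inv_sqrt_le_deriv_of_linear_growth {k σ : ℝ → ℝ} {c K : ℝ} (hc : 0 < c) (hK : 0 < K)
    (hσpos : ∀ x, 0 < σ x) (hlow : ∀ x, c ≤ deriv k x * σ x)
    (hgrowth : ∀ x, σ x ≤ K * (1 + |x|)) (x : ℝ) :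
    c / (2 * K) * (√(1 + x ^ 2))⁻¹ ≤ deriv k x := by
  have hsqrt : 1 + |x| ≤ 2 * √(1 + x ^ 2) := by
    have h1 : 1 ≤ √(1 + x ^ 2) := one_le_sqrt.2 (by nlinarith)
    have h2 : |x| ≤ √(1 + x ^ 2) := by
      rw [← sqrt_sq_eq_abs]; exact sqrt_le_sqrt (by linarith)
    linarith
  calc c / (2 * K) * (√(1 + x ^ 2))⁻¹ = c / (K * (2 * √(1 + x ^ 2))) := by
        field_simp
    _ ≤ c / (K * (1 + |x|)) := by gcongr
    _ ≤ c / σ x := div_le_div_of_nonneg_left hc.le (hσpos x) (hgrowth x)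
    _ ≤ deriv k x := (div_le_iff₀ (hσpos x)).2 (hlow x)

theorem stmt8_general (k σ : ℝ → ℝ) (hk : Function.Bijective k) (hk1 : ContDiff ℝ 1 k)
    (c K : ℝ) (hc : 0 < c) (hK : 0 < K)
    (hσpos : ∀ x, 0 < σ x)
    (hlow : ∀ x, c ≤ deriv k x * σ x)
    (hgrowth : ∀ x, σ x ≤ K * (1 + |x|)) :
    ∃ C₂ C₃ : ℝ, 0 < C₂ ∧ 0 < C₃ ∧
      ∀ x : ℝ, |Function.invFun k x| ≤ C₃ * Real.exp (C₂ * |x|) := by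
  set a := c / (2 * K)
  have ha : 0 < a := by positivity
  refine ⟨a⁻¹, exp (|k 0| / a), inv_pos.2 ha, exp_pos _, fun y => ?_⟩
  have hky : k (Function.invFun k y) = y := Function.rightInverse_invFun hk.surjective y
  calc |Function.invFun k y|
      ≤ exp (|k (Function.invFun k y) - k 0| / a) :=
        abs_le_exp_of_le_deriv (hk1.differentiable one_ne_zero) ha
          (inv_sqrt_le_deriv_of_linear_growth hc hK hσpos hlow hgrowth) _
    _ ≤ exp ((|y| + |k 0|) / a) := by
        rw [hky]; gcongr; exact abs_sub _ _
    _ = exp (|k 0| / a) * exp (a⁻¹ * |y|) := by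
        rw [← exp_add]; ring_nf

/-- If `k : ℝ → ℝ` is a `C¹` diffeomorphism onto `ℝ` with `0 < c ≤ k'σ ≤ C` for a
function `σ > 0` of linear growth `σ(x) ≤ K(1+|x|)`, then there exist constants
`C₂, C₃ > 0` such that `|k⁻¹(x)| ≤ C₃ e^{C₂|x|}` for all `x`. -/
theorem stmt8 (k σ : ℝ → ℝ) (hk : Function.Bijective k) (hk1 : ContDiff ℝ 1 k)
    (c C K : ℝ) (hc : 0 < c) (hcC : c ≤ C) (hK : 0 < K)
    (hσpos : ∀ x, 0 < σ x)
    (hlow : ∀ x, c ≤ deriv k x * σ x) (hhigh : ∀ x, deriv k x * σ x ≤ C)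
    (hgrowth : ∀ x, σ x ≤ K * (1 + |x|)) :
    ∃ C₂ C₃ : ℝ, 0 < C₂ ∧ 0 < C₃ ∧
      ∀ x : ℝ, |Function.invFun k x| ≤ C₃ * Real.exp (C₂ * |x|) :=
  stmt8_general k σ hk hk1 c K hc hK hσpos hlow hgrowth
end

section
/- Let E be a Polish space, (P^{s,x}) a canonical Markov class on D([0,T],E) whose transition function is measurable in time, V : [0,T] → ℝ continuous non-decreasing, and f ∈ B([0,T] × E, ℝ) such that E^{s,x}[∫_s^T |f(r,X_r)| dV_r] < ∞ for every (s,x). Then the map (s,x) ↦ E^{s,x}[∫_s^T f(r,X_r) dV_r] is jointly Borel on [0,T] × E. -/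
/-!
Truncate `f` at level `n`. For a bounded integrand the inner integral `∫_{[t,T]} ψ(r, X_r) dV_r`
is `C`-Lipschitz in `t` with respect to `V`, hence so is its `P^{s,x}`-expectation; the latter is
therefore continuous in `t` and Borel in `(s,x)`, so jointly Borel in `(t,s,x)`, and restricting
to the diagonal `t = s` keeps it Borel. Dominated convergence, first in `r` and then in `ω`
(with dominating function `∫_{[s,T]} |f(r,X_r)| dV_r`), shows that the truncated maps converge
pointwise to the map of the theorem, which is thus Borel as a pointwise limit.
-/

open Set MeasureTheory Filter Topology

def truncate (c y : ℝ) : ℝ := max (-c) (min y c)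

theorem continuous_truncate (c : ℝ) : Continuous (truncate c) := by
  unfold truncate; fun_prop

theorem abs_truncate_le {c : ℝ} (hc : 0 ≤ c) (y : ℝ) : |truncate c y| ≤ c :=
  abs_le.2 ⟨le_max_left _ _, max_le (by linarith) (min_le_right _ _)⟩

theorem abs_truncate_le_abs {c : ℝ} (hc : 0 ≤ c) (y : ℝ) : |truncate c y| ≤ |y| := by
  have hy := abs_nonneg y
  exact abs_le.2 ⟨le_max_of_le_right (le_min (neg_abs_le y) (by linarith)),
    max_le (by linarith) ((min_le_left _ _).trans (le_abs_self y))⟩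

theorem truncate_eq_self {c y : ℝ} (h : |y| ≤ c) : truncate c y = y := by
  obtain ⟨h₁, h₂⟩ := abs_le.1 h
  rw [truncate, min_eq_left h₂, max_eq_right h₁]

theorem tendsto_truncate_natCast (y : ℝ) :
    Tendsto (fun n : ℕ => truncate n y) atTop (𝓝 y) := by
  obtain ⟨N, hN⟩ := exists_nat_ge |y|
  refine tendsto_const_nhds.congr' ?_
  filter_upwards [eventually_ge_atTop N] with n hn
  exact (truncate_eq_self (hN.trans (Nat.cast_le.2 hn))).symm

theorem norm_integral_truncate_le {α : Type*} [MeasurableSpace α] {μ : Measure α} {f : α → ℝ}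
    (hf : Integrable f μ) {c : ℝ} (hc : 0 ≤ c) :
    ‖∫ x, truncate c (f x) ∂μ‖ ≤ ∫ x, |f x| ∂μ :=
  (norm_integral_le_integral_norm _).trans <| integral_mono_of_nonneg
    (ae_of_all _ fun _ => norm_nonneg _) hf.abs (ae_of_all _ fun x => abs_truncate_le_abs hc (f x))

theorem tendsto_integral_truncate {α : Type*} [MeasurableSpace α] {μ : Measure α} {f : α → ℝ}
    (hf : Integrable f μ) :
    Tendsto (fun n : ℕ => ∫ x, truncate n (f x) ∂μ) atTop (𝓝 (∫ x, f x ∂μ)) :=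
  tendsto_integral_of_dominated_convergence (fun x => |f x|)
    (fun _ => (continuous_truncate _).comp_aestronglyMeasurable hf.1) hf.abs
    (fun n => ae_of_all _ fun x => abs_truncate_le_abs n.cast_nonneg (f x))
    (ae_of_all _ fun x => tendsto_truncate_natCast (f x))

theorem continuous_of_dist_le_mul_dist {α β γ : Type*} [TopologicalSpace α]
    [PseudoMetricSpace β] [PseudoMetricSpace γ] {φ : α → β} {V : α → γ} (hV : Continuous V)
    (C : ℝ) (h : ∀ t t', dist (φ t) (φ t') ≤ C * dist (V t) (V t')) : Continuous φ := by
  refine continuous_iff_continuousAt.2 fun t₀ => tendsto_iff_dist_tendsto_zero.2 ?_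
  refine squeeze_zero (fun _ => dist_nonneg) (fun t => h t t₀) ?_
  simpa using ((hV.tendsto t₀).dist (tendsto_const_nhds (x := V t₀))).const_mul C

theorem dist_integral_le_of_forall_dist_le {Ω : Type*} [MeasurableSpace Ω] {P : Measure Ω}
    [IsProbabilityMeasure P] {f g : Ω → ℝ} (hf : Integrable f P) (hg : Integrable g P) {K : ℝ}
    (h : ∀ ω, dist (f ω) (g ω) ≤ K) : dist (∫ ω, f ω ∂P) (∫ ω, g ω ∂P) ≤ K := by
  rw [dist_eq_norm, ← integral_sub hf hg]
  simpa using norm_integral_le_of_norm_le_const (μ := P) (f := fun ω => f ω - g ω)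
    (ae_of_all _ fun ω => (dist_eq_norm _ _).symm.trans_le (h ω))

theorem dist_setIntegral_Icc_le_of_le {μ : Measure ℝ} [IsFiniteMeasureOnCompacts μ] {ψ : ℝ → ℝ}
    (hψ : Measurable ψ) {C : ℝ} (hψC : ∀ r, |ψ r| ≤ C) (T : ℝ) {t t' : ℝ} (htt' : t ≤ t') :
    dist (∫ r in Icc t T, ψ r ∂μ) (∫ r in Icc t' T, ψ r ∂μ) ≤ C * (μ (Icc t t')).toReal := by
  have hint : IntegrableOn ψ (Icc t T) μ :=
    IntegrableOn.of_bound isCompact_Icc.measure_lt_top hψ.aestronglyMeasurable C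
      (ae_of_all _ fun r => hψC r)
  rw [dist_eq_norm, ← setIntegral_sdiff measurableSet_Icc hint (Icc_subset_Icc_left htt')]
  have hsub : Icc t T \ Icc t' T ⊆ Icc t t' := fun _ ⟨⟨h₁, h₂⟩, h₃⟩ =>
    ⟨h₁, (lt_of_not_ge fun h => h₃ ⟨h, h₂⟩).le⟩
  have hC : 0 ≤ C := (abs_nonneg _).trans (hψC t)
  calc ‖∫ r in Icc t T \ Icc t' T, ψ r ∂μ‖
      ≤ C * (μ (Icc t T \ Icc t' T)).toReal :=
        norm_setIntegral_le_of_norm_le_const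
          ((measure_mono hsub).trans_lt isCompact_Icc.measure_lt_top)
          fun r _ => (Real.norm_eq_abs _).trans_le (hψC r)
    _ ≤ C * (μ (Icc t t')).toReal := by
        gcongr
        exact isCompact_Icc.measure_lt_top.ne

theorem StieltjesFunction.measure_Icc_of_continuous {V : StieltjesFunction ℝ}
    (hV : Continuous V) (a b : ℝ) : V.measure (Icc a b) = ENNReal.ofReal (V b - V a) := by
  rw [V.measure_Icc, leftLim_eq_of_tendsto ((hV.tendsto a).mono_left nhdsWithin_le_nhds)]

theorem StieltjesFunction.dist_setIntegral_Icc_le {V : StieltjesFunction ℝ} (hV : Continuous V)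
    {ψ : ℝ → ℝ} (hψ : Measurable ψ) {C : ℝ} (hψC : ∀ r, |ψ r| ≤ C) (T t t' : ℝ) :
    dist (∫ r in Icc t T, ψ r ∂V.measure) (∫ r in Icc t' T, ψ r ∂V.measure) ≤
      C * dist (V t) (V t') := by
  wlog htt' : t ≤ t' generalizing t t'
  · rw [dist_comm, dist_comm (V t)]
    exact this t' t (le_of_not_ge htt')
  rw [Real.dist_eq (V t), abs_sub_comm, abs_of_nonneg (sub_nonneg.2 (V.mono htt')),
    ← ENNReal.toReal_ofReal (sub_nonneg.2 (V.mono htt')), ← V.measure_Icc_of_continuous hV]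
  exact dist_setIntegral_Icc_le_of_le hψ hψC T htt'

theorem measurable_integral_setIntegral_Icc_of_bounded {E Ω : Type*} [MeasurableSpace E]
    [MeasurableSpace Ω] (T : ℝ) (P : ℝ → E → Measure Ω) [∀ s x, IsProbabilityMeasure (P s x)]
    (hBorel : ∀ Z : Ω → ℝ, Measurable Z → (∃ K, ∀ ω, |Z ω| ≤ K) →
      Measurable fun q : ℝ × E => ∫ ω, Z ω ∂(P q.1 q.2))
    {V : StieltjesFunction ℝ} (hV : Continuous V) {ψ : ℝ → Ω → ℝ}
    (hψ : Measurable (Function.uncurry ψ)) {C : ℝ} (hψC : ∀ r ω, |ψ r ω| ≤ C) :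
    Measurable fun q : ℝ × E => ∫ ω, ∫ r in Icc q.1 T, ψ r ω ∂V.measure ∂(P q.1 q.2) := by
  set Z : ℝ → Ω → ℝ := fun t ω => ∫ r in Icc t T, ψ r ω ∂V.measure
  have hZ_meas : ∀ t, Measurable (Z t) := fun t =>
    hψ.stronglyMeasurable.integral_prod_left.measurable
  have hZ_bdd : ∀ t ω, |Z t ω| ≤ C * (V.measure (Icc t T)).toReal := fun t ω =>
    (Real.norm_eq_abs _).symm.trans_le <| norm_setIntegral_le_of_norm_le_const
      isCompact_Icc.measure_lt_top fun r _ => (Real.norm_eq_abs _).trans_le (hψC r ω)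
  have hZ_int : ∀ t (q : ℝ × E), Integrable (Z t) (P q.1 q.2) := fun t q =>
    .of_bound (hZ_meas t).aestronglyMeasurable _
      (ae_of_all _ fun ω => (Real.norm_eq_abs _).trans_le (hZ_bdd t ω))
  have hF_meas : ∀ t, Measurable fun q : ℝ × E => ∫ ω, Z t ω ∂(P q.1 q.2) := fun t =>
    hBorel _ (hZ_meas t) ⟨_, hZ_bdd t⟩
  have hF_cont : ∀ q : ℝ × E, Continuous fun t => ∫ ω, Z t ω ∂(P q.1 q.2) := fun q =>
    continuous_of_dist_le_mul_dist hV C fun t t' =>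
      dist_integral_le_of_forall_dist_le (hZ_int t q) (hZ_int t' q) fun ω =>
        V.dist_setIntegral_Icc_le hV hψ.of_uncurry_right (hψC · ω) T t t'
  exact (measurable_uncurry_of_continuous_of_measurable hF_cont hF_meas).comp
    (measurable_fst.prodMk measurable_id)

theorem tendsto_integral_integral_truncate {α Ω : Type*} [MeasurableSpace α] [MeasurableSpace Ω]
    {μ : Measure α} [SFinite μ] {P : Measure Ω} {φ : α → Ω → ℝ}
    (hφ : Measurable (Function.uncurry φ))
    (hint : ∫⁻ ω, ∫⁻ r, ENNReal.ofReal |φ r ω| ∂μ ∂P < ⊤) :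
    Tendsto (fun n : ℕ => ∫ ω, ∫ r, truncate n (φ r ω) ∂μ ∂P) atTop
      (𝓝 (∫ ω, ∫ r, φ r ω ∂μ ∂P)) := by
  have hφ_abs : Measurable (Function.uncurry fun r ω => |φ r ω|) := hφ.abs
  have hφ_trunc : ∀ n : ℕ, Measurable (Function.uncurry fun r ω => truncate n (φ r ω)) :=
    fun n => (continuous_truncate n).measurable.comp hφ
  have hA : Measurable fun ω => ∫⁻ r, ENNReal.ofReal |φ r ω| ∂μ :=
    Measurable.lintegral_prod_left (f := fun r ω => ENNReal.ofReal |φ r ω|)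
      (ENNReal.measurable_ofReal.comp hφ_abs)
  have h_int : ∀ᵐ ω ∂P, Integrable (φ · ω) μ := by
    filter_upwards [ae_lt_top hA hint.ne] with ω hω
    exact ⟨hφ.of_uncurry_right.aestronglyMeasurable,
      by simpa only [HasFiniteIntegral, Real.enorm_eq_ofReal_abs] using hω⟩
  have h_dom : Integrable (fun ω => ∫ r, |φ r ω| ∂μ) P := by
    refine ⟨hφ_abs.stronglyMeasurable.integral_prod_left.aestronglyMeasurable,
      (lintegral_mono fun ω => ?_).trans_lt hint⟩
    exact (enorm_integral_le_lintegral_enorm (fun r => |φ r ω|)).trans_eq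
      (by simp only [Real.enorm_eq_ofReal_abs, abs_abs])
  exact tendsto_integral_of_dominated_convergence _
    (fun n => (hφ_trunc n).stronglyMeasurable.integral_prod_left.aestronglyMeasurable) h_dom
    (fun n => h_int.mono fun _ h => norm_integral_truncate_le h n.cast_nonneg)
    (h_int.mono fun _ h => tendsto_integral_truncate h)

theorem stmt15_general {E Ω : Type*} [MeasurableSpace E] [MeasurableSpace Ω]
    (T : ℝ)
    (X : ℝ → Ω → E) (hX : Measurable (Function.uncurry X))
    (P : ℝ → E → Measure Ω)
    (hprob : ∀ s x, IsProbabilityMeasure (P s x))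
    (hBorel : ∀ Z : Ω → ℝ, Measurable Z → (∃ K, ∀ ω, |Z ω| ≤ K) →
      Measurable fun q : ℝ × E => ∫ ω, Z ω ∂(P q.1 q.2))
    (V : StieltjesFunction ℝ) (hV : Continuous V)
    (f : ℝ → E → ℝ) (hf : Measurable (Function.uncurry f))
    (hint : ∀ s x, (∫⁻ ω, ∫⁻ r in Icc s T,
        ENNReal.ofReal |f r (X r ω)| ∂V.measure ∂(P s x)) < ⊤) :
    Measurable fun q : ℝ × E =>
      ∫ ω, (∫ r in Icc q.1 T, f r (X r ω) ∂V.measure) ∂(P q.1 q.2) := by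
  have hfX : Measurable (Function.uncurry fun r ω => f r (X r ω)) :=
    hf.comp (measurable_fst.prodMk hX)
  refine measurable_of_tendsto_metrizable' atTop (fun n => ?_)
    (tendsto_pi_nhds.2 fun q => tendsto_integral_integral_truncate hfX (hint q.1 q.2))
  exact measurable_integral_setIntegral_Icc_of_bounded T P hBorel hV
    ((continuous_truncate n).measurable.comp hfX) fun _ _ => abs_truncate_le n.cast_nonneg _

/-- For a canonical Markov class `(P^{s,x})` whose transition function is measurable
in time — encoded through the property that `(s,x) ↦ E^{s,x}[Z]` is Borel for every
bounded Borel `Z` — and a Borel `f` with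
`E^{s,x}[∫ₛᵀ |f(r,X_r)| dV_r] < ∞` for every `(s,x)`, the map
`(s,x) ↦ E^{s,x}[∫ₛᵀ f(r,X_r) dV_r]` is jointly Borel. -/
theorem stmt15 {E Ω : Type*} [MeasurableSpace E] [MeasurableSpace Ω]
    (T : ℝ) (hT : 0 < T)
    (X : ℝ → Ω → E) (hX : Measurable (Function.uncurry X))
    (P : ℝ → E → Measure Ω)
    (hprob : ∀ s x, IsProbabilityMeasure (P s x))
    (hBorel : ∀ Z : Ω → ℝ, Measurable Z → (∃ K, ∀ ω, |Z ω| ≤ K) →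
      Measurable fun q : ℝ × E => ∫ ω, Z ω ∂(P q.1 q.2))
    (V : StieltjesFunction ℝ) (hV : Continuous V)
    (f : ℝ → E → ℝ) (hf : Measurable (Function.uncurry f))
    (hint : ∀ s x, (∫⁻ ω, ∫⁻ r in Icc s T,
        ENNReal.ofReal |f r (X r ω)| ∂V.measure ∂(P s x)) < ⊤) :
    Measurable fun q : ℝ × E =>
      ∫ ω, (∫ r in Icc q.1 T, f r (X r ω) ∂V.measure) ∂(P q.1 q.2) :=
  stmt15_general T X hX P hprob hBorel V hV f hf hint
end
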